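/- Let n, r, d be positive integers with r ≥ 2 and n ≥ r, and set a = ⌊(nd² + 1)/r⌋. Then D_{(r,d,a)}^{BN} = ∅: no integer triple v₁ = (r₁, d₁, a₁) satisfies all of v₁² = −2 or v₁² = 0, 0 < d₁ ≤ d, ⟨(r,d,a), v₁⟩ < v₁² + 2, (a₁d − ad₁)·(r₁d − rd₁) > 0, and 0 < dr₁ − d₁r ≤ da₁ − d₁a. -/

import Mathlib

/-!
Write `x = d r₁ - d₁ r`, `y = d a₁ - d₁ a` (so `1 ≤ x ≤ y`) and `v² = 2w`, where
`w = (nd² + 1) mod r - 1 ≤ r - 2`. Multiplying out, `v₁²` and `⟨v, v₁⟩` give an exact formula for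
`d₁(ry + ax) + xy` and a lower bound for `ry + ax`. As `n ≥ r` forces `a ≥ d²`, the formula with
`xy ≥ 1` and `ry + ax ≥ r + a` bounds `w d₁²` from above, the lower bound bounds it from below, and
the two are incompatible (for `d₁ = 1` and `v₁² = -2`, already `w ≤ r - 2` contradicts the first).
-/

/-- Mukai square of the triple `(r, d, a)` on a K3 surface with `H² = 2n`:
`v² = 2nd² − 2ra`. -/
def mukaiSq (n r d a : ℤ) : ℤ := 2 * n * d ^ 2 - 2 * r * a

/-- Mukai pairing `⟨(r,d,a), (r₁,d₁,a₁)⟩ = 2ndd₁ − ra₁ − r₁a`. -/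
def mukaiPair (n r d a r₁ d₁ a₁ : ℤ) : ℤ := 2 * n * d * d₁ - r * a₁ - r₁ * a

/-- `(r₁, d₁, a₁) ∈ D_{(r,d,a)}`. -/
def memD (n r d a r₁ d₁ a₁ : ℤ) : Prop :=
  (mukaiSq n r₁ d₁ a₁ = 0 ∨ mukaiSq n r₁ d₁ a₁ = -2) ∧
  0 < d₁ ∧ d₁ ≤ d ∧
  mukaiPair n r d a r₁ d₁ a₁ < mukaiSq n r₁ d₁ a₁ + 2 ∧
  0 < (a₁ * d - a * d₁) * (r₁ * d - r * d₁)

/-- `(r₁, d₁, a₁) ∈ D_{(r,d,a)}^{BN}`. -/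
def memDBN (n r d a r₁ d₁ a₁ : ℤ) : Prop :=
  memD n r d a r₁ d₁ a₁ ∧
  0 < d * r₁ - d₁ * r ∧ d * r₁ - d₁ * r ≤ d * a₁ - d₁ * a

section MukaiIdentities

variable (n r d a r₁ d₁ a₁ : ℤ)

theorem mul_mukaiPair_eq :
    d * mukaiPair n r d a r₁ d₁ a₁ =
      d₁ * mukaiSq n r d a - (r * (d * a₁ - d₁ * a) + a * (d * r₁ - d₁ * r)) := by
  unfold mukaiPair mukaiSq; ring

theorem sq_mul_mukaiSq_sub_sq_mul_mukaiSq :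
    d₁ ^ 2 * mukaiSq n r d a - d ^ 2 * mukaiSq n r₁ d₁ a₁ =
      2 * (d₁ * (r * (d * a₁ - d₁ * a) + a * (d * r₁ - d₁ * r)) +
        (d * r₁ - d₁ * r) * (d * a₁ - d₁ * a)) := by
  unfold mukaiSq; ring

end MukaiIdentities

theorem mukaiSq_ediv_eq (n r d : ℤ) :
    mukaiSq n r d ((n * d ^ 2 + 1) / r) = 2 * ((n * d ^ 2 + 1) % r - 1) := by
  have := Int.mul_ediv_add_emod (n * d ^ 2 + 1) r
  unfold mukaiSq; linarith

theorem sq_le_ediv_of_le {n r : ℤ} (d : ℤ) (hr : 0 < r) (hnr : r ≤ n) :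
    d ^ 2 ≤ (n * d ^ 2 + 1) / r :=
  Int.le_ediv_of_mul_le hr (by nlinarith [sq_nonneg d])

/-- Here `x = d r₁ - d₁ r`, `y = d a₁ - d₁ a`, `v² = 2w` and `v₁² = -2e`: `hsq` is half of
`sq_mul_mukaiSq_sub_sq_mul_mukaiSq`, and `hpair` is `mul_mukaiPair_eq` combined with
`⟨v, v₁⟩ < v₁² + 2`. -/
theorem false_of_cross_terms {r d a d₁ x y w e : ℤ} (hr : 0 ≤ r) (hd : 0 ≤ d) (ha : d ^ 2 ≤ a)
    (hw : w ≤ r - 2) (hd₁ : 1 ≤ d₁) (hx : 1 ≤ x) (hxy : x ≤ y) (he : e = 0 ∨ e = 1)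
    (hsq : d₁ * (r * y + a * x) + x * y = e * d ^ 2 + w * d₁ ^ 2)
    (hpair : 2 * d₁ * w + (2 * e - 1) * d ≤ r * y + a * x) : False := by
  have hxy₁ : 1 ≤ x * y := by nlinarith
  have hlow : d₁ * (r + a) + 1 ≤ e * d ^ 2 + w * d₁ ^ 2 := by
    have : r + a ≤ r * y + a * x := by nlinarith
    nlinarith
  have hup : 1 ≤ e * d ^ 2 - w * d₁ ^ 2 - (2 * e - 1) * d * d₁ := by nlinarith
  rcases he with rfl | rfl
  · nlinarith [sq_nonneg (d - 1)]
  · rcases hd₁.eq_or_lt with rfl | hd₁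
    · linarith
    · have : 2 * (r + a + d) ≤ d₁ * (r + a + d) := by
        apply mul_le_mul_of_nonneg_right (by omega); nlinarith [sq_nonneg (d + 1)]
      nlinarith

theorem DBN_empty_of_n_ge_r_general (n r d : ℤ) (hr : 2 ≤ r) (hd : 0 < d)
    (hnr : r ≤ n) :
    ∀ r₁ d₁ a₁ : ℤ, ¬ memDBN n r d ((n * d ^ 2 + 1) / r) r₁ d₁ a₁ := by
  rintro r₁ d₁ a₁ ⟨⟨hsq₁, hd₁, -, hpair, -⟩, hx, hxy⟩
  obtain ⟨e, he, hsq₁⟩ : ∃ e : ℤ, (e = 0 ∨ e = 1) ∧ mukaiSq n r₁ d₁ a₁ = -2 * e := by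
    rcases hsq₁ with h | h
    exacts [⟨0, .inl rfl, by rw [h]; rfl⟩, ⟨1, .inr rfl, by rw [h]; rfl⟩]
  have hw : (n * d ^ 2 + 1) % r - 1 ≤ r - 2 := by
    have := Int.emod_lt_of_pos (n * d ^ 2 + 1) (by omega : 0 < r); omega
  have hdpair := mul_le_mul_of_nonneg_left
    (show mukaiPair n r d _ r₁ d₁ a₁ ≤ 1 - 2 * e by linarith) hd.le
  have hkey := sq_mul_mukaiSq_sub_sq_mul_mukaiSq n r d ((n * d ^ 2 + 1) / r) r₁ d₁ a₁
  rw [mul_mukaiPair_eq, mukaiSq_ediv_eq] at hdpair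
  rw [mukaiSq_ediv_eq, hsq₁] at hkey
  exact false_of_cross_terms (by omega) hd.le (sq_le_ediv_of_le d (by omega) hnr) hw hd₁ hx hxy
    he (by linarith) (by linarith)

/-- if `r ≥ 2`, `n ≥ r` and `a = ⌊(nd² + 1)/r⌋`, then
`D_{(r,d,a)}^{BN} = ∅`. -/
theorem DBN_empty_of_n_ge_r (n r d : ℤ) (hn : 0 < n) (hr : 2 ≤ r) (hd : 0 < d)
    (hnr : r ≤ n) :
    ∀ r₁ d₁ a₁ : ℤ, ¬ memDBN n r d ((n * d ^ 2 + 1) / r) r₁ d₁ a₁ :=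
  DBN_empty_of_n_ge_r_general n r d hr hd hnr
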